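/- arXiv:1708.00883 — 2 statements merged into one kernel-verified Lean document; each statement's English description precedes it below -/
import Mathlib

section
/- Let G be a tripartite graph on mnq vertices that is degree symmetric under a GTPT, and let G' be the graph obtained from G by the GTPT. If the Laplacian density matrix ρ_l(G) is fully separable on H_A ⊗ H_B ⊗ H_C, then ρ_l(G') is fully separable. -/
/-! Degree symmetry makes the degree matrices of `G` and `G'` equal, and the adjacency matrix of
`G'` is the partial transpose of that of `G`; since a diagonal matrix is its own partial transpose,
`L(G') = L(G)^{T_A}` and, the trace being preserved, `ρ_l(G') = ρ_l(G)^{T_A}`. Partial transposition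
maps `Σ pᵢ Aᵢ ⊗ Bᵢ ⊗ Cᵢ` to `Σ pᵢ Aᵢᵀ ⊗ Bᵢ ⊗ Cᵢ`, and `Aᵢᵀ` is again a density matrix. -/

open Matrix Kronecker
open scoped ComplexOrder

/-- The graph theoretical partial transpose (GTPT) of a tripartite graph on
`Fin m × Fin n × Fin q`: each edge `(v_{i,j,k}, v_{s,u,v})` with `i ≠ s` is replaced by
`(v_{s,j,k}, v_{i,u,v})`, and all other edges are kept. Its adjacency matrix is the
partial transpose (in the first factor) of that of `G`. -/
def gtpt {m n q : ℕ} (G : SimpleGraph (Fin m × Fin n × Fin q)) :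
    SimpleGraph (Fin m × Fin n × Fin q) where
  Adj x y := G.Adj (y.1, x.2) (x.1, y.2)
  symm := ⟨fun x y h => G.adj_symm h⟩
  loopless := ⟨fun x h => G.irrefl h⟩

instance {m n q : ℕ} (G : SimpleGraph (Fin m × Fin n × Fin q)) [DecidableRel G.Adj] :
    DecidableRel (gtpt G).Adj :=
  fun x y => inferInstanceAs (Decidable (G.Adj _ _))

/-- A density matrix: positive semidefinite with unit trace. -/
def IsDensity {d : Type*} [Fintype d] [DecidableEq d] (ρ : Matrix d d ℂ) : Prop :=
  ρ.PosSemidef ∧ ρ.trace = 1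

/-- Full separability of a tripartite matrix on `ℂ^m ⊗ ℂ^n ⊗ ℂ^q`. -/
def FullySep3 {m n q : ℕ} (ρ : Matrix (Fin m × Fin n × Fin q) (Fin m × Fin n × Fin q) ℂ) :
    Prop :=
  ∃ (t : ℕ) (p : Fin t → ℝ)
    (A : Fin t → Matrix (Fin m) (Fin m) ℂ)
    (B : Fin t → Matrix (Fin n) (Fin n) ℂ)
    (C : Fin t → Matrix (Fin q) (Fin q) ℂ),
    (∀ i, 0 ≤ p i) ∧ (∑ i, p i = 1) ∧
    (∀ i, IsDensity (A i)) ∧ (∀ i, IsDensity (B i)) ∧ (∀ i, IsDensity (C i)) ∧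
    ρ = ∑ i, (p i : ℂ) • (A i ⊗ₖ (B i ⊗ₖ C i))

/-- The Laplacian density matrix `ρ_l(G) = L(G) / tr(L(G))` (over `ℂ`). -/
noncomputable def rhoLap {m n q : ℕ} (G : SimpleGraph (Fin m × Fin n × Fin q))
    [DecidableRel G.Adj] : Matrix (Fin m × Fin n × Fin q) (Fin m × Fin n × Fin q) ℂ :=
  ((G.lapMatrix ℂ).trace)⁻¹ • G.lapMatrix ℂ

namespace Matrix

variable {α β R : Type*}

section Semiring

variable [Semiring R]

def partialTransposeFst : Matrix (α × β) (α × β) R →ₗ[R] Matrix (α × β) (α × β) R where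
  toFun M := of fun x y => M (y.1, x.2) (x.1, y.2)
  map_add' _ _ := rfl
  map_smul' _ _ := rfl

@[simp]
theorem partialTransposeFst_apply (M : Matrix (α × β) (α × β) R) (x y : α × β) :
    partialTransposeFst M x y = M (y.1, x.2) (x.1, y.2) :=
  rfl

theorem trace_partialTransposeFst [Fintype α] [Fintype β] (M : Matrix (α × β) (α × β) R) :
    (partialTransposeFst M).trace = M.trace :=
  rfl

theorem partialTransposeFst_diagonal [DecidableEq α] [DecidableEq β] (d : α × β → R) :
    partialTransposeFst (diagonal d) = diagonal d := by
  ext ⟨a, b⟩ ⟨a', b'⟩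
  by_cases h : a = a' ∧ b = b'
  · obtain ⟨rfl, rfl⟩ := h
    simp
  · have h' : ¬(a' = a ∧ b = b') := fun ⟨h₁, h₂⟩ => h ⟨h₁.symm, h₂⟩
    simp [Prod.ext_iff, h, h']

end Semiring

theorem partialTransposeFst_kronecker [CommSemiring R] (A : Matrix α α R) (M : Matrix β β R) :
    partialTransposeFst (A ⊗ₖ M) = Aᵀ ⊗ₖ M := by
  ext x y
  simp [kroneckerMap_apply]

end Matrix

theorem IsDensity.transpose {d : Type*} [Fintype d] [DecidableEq d]
    {ρ : Matrix d d ℂ} (h : IsDensity ρ) : IsDensity ρᵀ :=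
  ⟨h.1.transpose, by rw [trace_transpose]; exact h.2⟩

theorem FullySep3.partialTransposeFst {m n q : ℕ}
    {ρ : Matrix (Fin m × Fin n × Fin q) (Fin m × Fin n × Fin q) ℂ} (h : FullySep3 ρ) :
    FullySep3 (partialTransposeFst ρ) := by
  obtain ⟨t, p, A, B, C, hp, hp_sum, hA, hB, hC, rfl⟩ := h
  refine ⟨t, p, fun i => (A i)ᵀ, B, C, hp, hp_sum, fun i => (hA i).transpose, hB, hC, ?_⟩
  simp only [map_sum, map_smul, partialTransposeFst_kronecker]

namespace SimpleGraph

variable {m n q : ℕ} (G : SimpleGraph (Fin m × Fin n × Fin q)) [DecidableRel G.Adj]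

theorem adjMatrix_gtpt (R : Type*) [Semiring R] :
    (gtpt G).adjMatrix R = partialTransposeFst (G.adjMatrix R) :=
  rfl

theorem lapMatrix_gtpt (R : Type*) [Ring R] (hdeg : ∀ v, G.degree v = (gtpt G).degree v) :
    (gtpt G).lapMatrix R = partialTransposeFst (G.lapMatrix R) := by
  have hD : (gtpt G).degMatrix R = G.degMatrix R := by
    simp only [degMatrix, hdeg]
  rw [lapMatrix, lapMatrix, map_sub, hD, degMatrix, partialTransposeFst_diagonal, adjMatrix_gtpt]

theorem rhoLap_gtpt (hdeg : ∀ v, G.degree v = (gtpt G).degree v) :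
    rhoLap (gtpt G) = partialTransposeFst (rhoLap G) := by
  rw [rhoLap, rhoLap, map_smul, lapMatrix_gtpt G ℂ hdeg, trace_partialTransposeFst]

end SimpleGraph

/-- If a tripartite graph `G` is degree symmetric under GTPT, then full separability of
`ρ_l(G)` implies full separability of `ρ_l(G')`, where `G'` is the GTPT of `G`. -/
theorem fullySep_of_degreeSymmetric {m n q : ℕ}
    (G : SimpleGraph (Fin m × Fin n × Fin q)) [DecidableRel G.Adj]
    (hdeg : ∀ v, G.degree v = (gtpt G).degree v)
    (hsep : FullySep3 (rhoLap G)) :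
    FullySep3 (rhoLap (gtpt G)) := by
  rw [G.rhoLap_gtpt hdeg]
  exact hsep.partialTransposeFst
end

section
/- Every partially symmetric multipartite graph G (on N_1⋯N_n vertices) is degree symmetric under GTPT: each vertex has equal degree in G and in the GTPT graph G'. -/
/-- The graph theoretical partial transpose (GTPT) of a multipartite graph whose
vertices `v_{i_1,…,i_n}` are functions `x` with `x j : Fin (N j)`: each edge `(x, y)` with
`x 0 ≠ y 0` is replaced by the edge obtained from exchanging the first coordinates of the
endpoints, and all other edges are kept. -/
def gtptN {k : ℕ} {N : Fin (k + 1) → ℕ}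
    (G : SimpleGraph (∀ j : Fin (k + 1), Fin (N j))) :
    SimpleGraph (∀ j : Fin (k + 1), Fin (N j)) where
  Adj x y := G.Adj (Function.update x 0 (y 0)) (Function.update y 0 (x 0))
  symm := ⟨fun _ _ h => G.adj_symm h⟩
  loopless := ⟨fun x h => G.irrefl (v := x) (by simpa [Function.update_eq_self] using h)⟩

instance {k : ℕ} {N : Fin (k + 1) → ℕ} (G : SimpleGraph (∀ j : Fin (k + 1), Fin (N j)))
    [DecidableRel G.Adj] : DecidableRel (gtptN G).Adj :=
  fun x y => inferInstanceAs (Decidable (G.Adj (Function.update x 0 (y 0)) (Function.update y 0 (x 0))))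

/-!
Exchanging the first coordinates of the endpoints of a pair is an involution, so the GTPT is
an involution on graphs, and it is monotone. Partial symmetry says exactly `G ≤ G'`; applying
the GTPT gives `G' ≤ G'' = G`, hence `G' = G` and all degrees agree.
-/

section

variable {k : ℕ} {N : Fin (k + 1) → ℕ} {G H : SimpleGraph (∀ j : Fin (k + 1), Fin (N j))}

theorem gtptN_adj {x y : ∀ j : Fin (k + 1), Fin (N j)} :
    (gtptN G).Adj x y ↔ G.Adj (Function.update x 0 (y 0)) (Function.update y 0 (x 0)) :=
  Iff.rfl

theorem gtptN_adj_of_fst_eq {x y : ∀ j : Fin (k + 1), Fin (N j)} (h : x 0 = y 0) :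
    (gtptN G).Adj x y ↔ G.Adj x y := by
  rw [gtptN_adj, ← h, Function.update_eq_self, h, Function.update_eq_self]

theorem gtptN_gtptN : gtptN (gtptN G) = G := by
  ext x y
  simp only [gtptN_adj, Function.update_idem, Function.update_self, Function.update_eq_self]

theorem gtptN_mono (hGH : G ≤ H) : gtptN G ≤ gtptN H :=
  fun _ _ h => hGH h

theorem le_gtptN_of_partially_symmetric
    (hps : ∀ x y : ∀ j : Fin (k + 1), Fin (N j), x 0 ≠ y 0 → G.Adj x y →
      G.Adj (Function.update x 0 (y 0)) (Function.update y 0 (x 0))) :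
    G ≤ gtptN G := by
  intro x y hxy
  by_cases h : x 0 = y 0
  · exact (gtptN_adj_of_fst_eq h).2 hxy
  · exact hps x y h hxy

theorem gtptN_eq_self_of_le (hle : G ≤ gtptN G) : gtptN G = G :=
  le_antisymm ((gtptN_mono hle).trans_eq gtptN_gtptN) hle

end

/-- Every partially symmetric multipartite graph is degree symmetric under GTPT:
if for every edge `(x, y)` with `x 0 ≠ y 0` the pair obtained by exchanging the first
coordinates is also an edge, then every vertex has the same degree in `G` and in the
GTPT graph `G'`. -/
theorem degree_symmetric_of_partially_symmetric_multipartite {k : ℕ}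
    {N : Fin (k + 1) → ℕ}
    (G : SimpleGraph (∀ j : Fin (k + 1), Fin (N j))) [DecidableRel G.Adj]
    (hps : ∀ x y : ∀ j : Fin (k + 1), Fin (N j), x 0 ≠ y 0 → G.Adj x y →
      G.Adj (Function.update x 0 (y 0)) (Function.update y 0 (x 0))) :
    ∀ v, G.degree v = (gtptN G).degree v := by
  have hG : gtptN G = G := gtptN_eq_self_of_le (le_gtptN_of_partially_symmetric hps)
  intro v
  convert rfl
end
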